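/- Let a, b, c be positive integers and let x be an integer with max(a,b) ≤ x ≤ a+b−1. Then Σ_{i=1}^{a+b−x} E(i, x−a+i) = a·c·(a+b−x)/(a+b); equivalently, (a+b) · Σ_T Σ_{i=1}^{a+b−x} T(i, x−a+i) = a·c·(a+b−x) · N(a,b,c), where the outer sum is over all plane partitions T in the a×b×c box. -/

import Mathlib

open Finset

/-- Plane partitions in an `a × b × c` box: assignments of entries in `{0, …, c}` to the
cells of an `a × b` rectangle with weakly decreasing rows and columns. -/
def PlanePartitions (a b c : ℕ) : Finset (Fin a → Fin b → Fin (c + 1)) :=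
  univ.filter (fun T =>
    (∀ i : Fin a, ∀ j j' : Fin b, j ≤ j' → T i j' ≤ T i j) ∧
    (∀ i i' : Fin a, ∀ j : Fin b, i ≤ i' → T i' j ≤ T i j))

/-- The entry `T(i, j)` of a plane partition at the 1-based cell `(i, j)`. -/
def entry (a b c : ℕ) (T : Fin a → Fin b → Fin (c + 1)) (i j : ℕ) : ℕ :=
  if h : 1 ≤ i ∧ i ≤ a ∧ 1 ≤ j ∧ j ≤ b then
    (T ⟨i - 1, by omega⟩ ⟨j - 1, by omega⟩ : ℕ)
  else 0

/-- `E a b c i j` is the expected value of the entry at the 1-based cell `(i, j)` of a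
uniformly random plane partition in an `a × b × c` box. -/
def E (a b c i j : ℕ) : ℚ :=
  (∑ T ∈ PlanePartitions a b c, (entry a b c T i j : ℚ))
    / ((PlanePartitions a b c).card : ℚ)

/-! Let `S v` be the total, over all plane partitions, of the entries on the diagonal
`J - I = b - v`. Toggling that diagonal (replacing each entry `t` by
`max (right, below) + min (above, left) - t`) is an involution of the plane partitions, and
along the diagonal the sum of `t` and its toggle telescopes to the sums of the two neighbouring
diagonals. Hence `S (v - 1) + S (v + 1) = 2 S v`, so `S` is linear on `[0, a + b]`; it vanishes at
`0` and equals `a c N(a, b, c)` at `a + b`, where the whole diagonal lies in the padding by `c`. -/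

theorem sum_range_max_add_min {M : Type*} [AddCancelCommMonoid M] [LinearOrder M]
    (p q : ℕ → M) (n : ℕ) (h₀ : q 1 ≤ p 0) (hₙ : q (n + 1) ≤ p n) :
    ∑ i ∈ range n, (max (p (i + 1)) (q (i + 2)) + min (p i) (q (i + 1))) =
      ∑ i ∈ range n, p (i + 1) + ∑ i ∈ range n, q (i + 1) := by
  have key : ∑ i ∈ range (n + 1), (max (p i) (q (i + 1)) + min (p i) (q (i + 1))) =
      ∑ i ∈ range (n + 1), (p i + q (i + 1)) :=
    sum_congr rfl fun i _ => by rw [add_comm, min_add_max]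
  rw [sum_add_distrib, sum_add_distrib, sum_range_succ', sum_range_succ _ n, sum_range_succ' p,
    sum_range_succ _ n, max_eq_left h₀, min_eq_right hₙ] at key
  refine add_right_cancel (b := p 0 + q (n + 1)) ?_
  rw [sum_add_distrib]
  convert key using 1 <;> abel

theorem eq_nsmul_of_add_eq_two_nsmul {M : Type*} [AddCancelCommMonoid M] {f : ℕ → M} {n : ℕ}
    (h₀ : f 0 = 0) (hf : ∀ w, w + 2 ≤ n → f w + f (w + 2) = 2 • f (w + 1)) :
    ∀ v ≤ n, f v = v • f 1
  | 0, _ => by rw [h₀, zero_nsmul]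
  | 1, _ => (one_nsmul _).symm
  | w + 2, hv => by
    refine add_left_cancel (a := f w) ?_
    rw [hf w hv, eq_nsmul_of_add_eq_two_nsmul h₀ hf (w + 1) (by omega),
      eq_nsmul_of_add_eq_two_nsmul h₀ hf w (by omega), smul_smul, ← add_nsmul]
    congr 1
    ring

namespace PlanePartitions

variable {a b c : ℕ}

/-- Padding by `c` above/left of the box and by `0` below/right of it makes every plane partition
antitone on all of `ℤ × ℤ`, so cells on the boundary of the box need no special treatment. -/
def extEntry (T : Fin a → Fin b → Fin (c + 1)) (I J : ℤ) : ℕ :=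
  if h : 1 ≤ I ∧ I ≤ a ∧ 1 ≤ J ∧ J ≤ b then
    T ⟨(I - 1).toNat, by omega⟩ ⟨(J - 1).toNat, by omega⟩
  else if I ≤ 0 ∨ J ≤ 0 then c else 0

def ExtAntitone (T : Fin a → Fin b → Fin (c + 1)) : Prop :=
  (∀ I, Antitone (extEntry T I)) ∧ ∀ J, Antitone fun I => extEntry T I J

section extEntry

variable (T : Fin a → Fin b → Fin (c + 1))

theorem extEntry_le (I J : ℤ) : extEntry T I J ≤ c := by
  unfold extEntry
  split_ifs
  · exact Nat.lt_succ_iff.mp (T _ _).isLt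
  all_goals omega

theorem extEntry_of_mem_box {I J : ℤ} (h : 1 ≤ I ∧ I ≤ a ∧ 1 ≤ J ∧ J ≤ b) :
    extEntry T I J = T ⟨(I - 1).toNat, by omega⟩ ⟨(J - 1).toNat, by omega⟩ :=
  dif_pos h

theorem extEntry_of_nonpos {I J : ℤ} (h : I ≤ 0 ∨ J ≤ 0) : extEntry T I J = c := by
  rw [extEntry, dif_neg (by omega), if_pos h]

theorem extEntry_of_gt {I J : ℤ} (hI : 1 ≤ I) (hJ : 1 ≤ J) (h : a < I ∨ b < J) :
    extEntry T I J = 0 := by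
  rw [extEntry, dif_neg (by omega), if_neg (by omega)]

theorem extEntry_natCast_add_one (i : Fin a) (j : Fin b) :
    extEntry T ((i : ℕ) + 1) ((j : ℕ) + 1) = T i j := by
  have := i.isLt
  have := j.isLt
  rw [extEntry_of_mem_box T (by omega)]
  congr 2 <;> ext <;> simp

theorem entry_eq_extEntry {i j : ℕ} (hi : 1 ≤ i) (hj : 1 ≤ j) :
    entry a b c T i j = extEntry T i j := by
  by_cases h : i ≤ a ∧ j ≤ b
  · rw [entry, dif_pos (by omega), extEntry_of_mem_box T (by omega)]
    congr <;> omega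
  · rw [entry, dif_neg (by omega), extEntry_of_gt T (by omega) (by omega) (by omega)]

variable {T}

theorem extEntry_add_one_right_le (hT : T ∈ PlanePartitions a b c) (I J : ℤ) :
    extEntry T I (J + 1) ≤ extEntry T I J := by
  simp only [PlanePartitions, mem_filter, mem_univ, true_and] at hT
  by_cases hc : I ≤ 0 ∨ J ≤ 0
  · rw [extEntry_of_nonpos T hc]
    exact extEntry_le T I (J + 1)
  by_cases h0 : a < I ∨ b < J + 1
  · rw [extEntry_of_gt T (by omega) (by omega) h0]
    exact Nat.zero_le _
  rw [extEntry_of_mem_box T (by omega), extEntry_of_mem_box T (by omega)]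
  exact hT.1 _ _ _ (Fin.mk_le_mk.mpr (by omega))

theorem extEntry_add_one_left_le (hT : T ∈ PlanePartitions a b c) (I J : ℤ) :
    extEntry T (I + 1) J ≤ extEntry T I J := by
  simp only [PlanePartitions, mem_filter, mem_univ, true_and] at hT
  by_cases hc : I ≤ 0 ∨ J ≤ 0
  · rw [extEntry_of_nonpos T hc]
    exact extEntry_le T (I + 1) J
  by_cases h0 : a < I + 1 ∨ b < J
  · rw [extEntry_of_gt T (by omega) (by omega) h0]
    exact Nat.zero_le _
  rw [extEntry_of_mem_box T (by omega), extEntry_of_mem_box T (by omega)]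
  exact hT.2 _ _ _ (Fin.mk_le_mk.mpr (by omega))

theorem extAntitone_iff_mem : ExtAntitone T ↔ T ∈ PlanePartitions a b c := by
  refine ⟨fun hT => ?_, fun hT =>
    ⟨fun I => antitone_int_of_succ_le (extEntry_add_one_right_le hT I),
      fun J => antitone_int_of_succ_le (extEntry_add_one_left_le hT · J)⟩⟩
  simp only [PlanePartitions, mem_filter, mem_univ, true_and]
  refine ⟨fun i j j' h => ?_, fun i i' j h => ?_⟩
  · rw [Fin.le_def, ← extEntry_natCast_add_one T i j, ← extEntry_natCast_add_one T i j']
    exact hT.1 _ (by have := Fin.le_def.mp h; omega)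
  · rw [Fin.le_def, ← extEntry_natCast_add_one T i j, ← extEntry_natCast_add_one T i' j]
    exact hT.2 _ (by have := Fin.le_def.mp h; omega)

theorem ExtAntitone.max_le_le_min (hT : ExtAntitone T) (I J : ℤ) :
    max (extEntry T I (J + 1)) (extEntry T (I + 1) J) ≤ extEntry T I J ∧
      extEntry T I J ≤ min (extEntry T (I - 1) J) (extEntry T I (J - 1)) :=
  ⟨max_le (hT.1 I (lt_add_one J).le) (hT.2 J (lt_add_one I).le),
    le_min (hT.2 J (sub_one_lt I).le) (hT.1 I (sub_one_lt J).le)⟩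

end extEntry

def toggleValue (T : Fin a → Fin b → Fin (c + 1)) (I J : ℤ) : ℕ :=
  max (extEntry T I (J + 1)) (extEntry T (I + 1) J) +
    min (extEntry T (I - 1) J) (extEntry T I (J - 1)) - extEntry T I J

/-- Reflects each entry on the diagonal `J - I = d` within the interval allowed by its
neighbours; the `min c` only matters for functions that are not plane partitions. -/
def toggle (d : ℤ) (T : Fin a → Fin b → Fin (c + 1)) : Fin a → Fin b → Fin (c + 1) :=
  fun i j => if ((j : ℕ) : ℤ) = (i : ℕ) + d then
    ⟨min c (toggleValue T ((i : ℕ) + 1) ((j : ℕ) + 1)), Nat.lt_succ_of_le (min_le_left _ _)⟩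
  else T i j

section toggle

variable (T : Fin a → Fin b → Fin (c + 1))

theorem extEntry_toggle (d I J : ℤ) :
    extEntry (toggle d T) I J =
      if (1 ≤ I ∧ I ≤ a ∧ 1 ≤ J ∧ J ≤ b) ∧ J = I + d then min c (toggleValue T I J)
      else extEntry T I J := by
  by_cases h : 1 ≤ I ∧ I ≤ a ∧ 1 ≤ J ∧ J ≤ b
  · rw [extEntry_of_mem_box _ h, extEntry_of_mem_box _ h]
    simp only [toggle, Int.toNat_of_nonneg (show 0 ≤ I - 1 by omega),
      Int.toNat_of_nonneg (show 0 ≤ J - 1 by omega), sub_add_cancel]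
    split_ifs <;> first | rfl | omega
  · rw [if_neg fun h' => h h'.1, extEntry, extEntry, dif_neg h, dif_neg h]

theorem extEntry_toggle_of_ne {d I J : ℤ} (h : J ≠ I + d) :
    extEntry (toggle d T) I J = extEntry T I J := by
  rw [extEntry_toggle, if_neg fun h' => h h'.2]

variable {T}

theorem ExtAntitone.toggleValue_bounds (hT : ExtAntitone T) (I J : ℤ) :
    max (extEntry T I (J + 1)) (extEntry T (I + 1) J) ≤ toggleValue T I J ∧
      toggleValue T I J ≤ min (extEntry T (I - 1) J) (extEntry T I (J - 1)) := by
  have := hT.max_le_le_min I J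
  unfold toggleValue
  omega

theorem ExtAntitone.extEntry_toggle (hT : ExtAntitone T) (d I J : ℤ) :
    extEntry (toggle d T) I J =
      if (1 ≤ I ∧ I ≤ a ∧ 1 ≤ J ∧ J ≤ b) ∧ J = I + d then toggleValue T I J
      else extEntry T I J := by
  have hv := (hT.toggleValue_bounds I J).2
  have hc := extEntry_le T (I - 1) J
  rw [PlanePartitions.extEntry_toggle, min_eq_right (by omega)]

theorem ExtAntitone.extAntitone_toggle (hT : ExtAntitone T) (d : ℤ) :
    ExtAntitone (toggle d T) := by
  have hv := hT.toggleValue_bounds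
  refine ⟨fun I => antitone_int_of_succ_le fun J => ?_,
    fun J => antitone_int_of_succ_le fun I => ?_⟩
  · rw [hT.extEntry_toggle, hT.extEntry_toggle]
    split_ifs with h₁ h₂ h₂
    · omega
    · exact (hv I (J + 1)).2.trans (by rw [add_sub_cancel_right]; exact min_le_right _ _)
    · exact (le_max_left _ _).trans (hv I J).1
    · exact hT.1 I (lt_add_one J).le
  · rw [hT.extEntry_toggle, hT.extEntry_toggle]
    split_ifs with h₁ h₂ h₂
    · omega
    · exact (hv (I + 1) J).2.trans (by rw [add_sub_cancel_right]; exact min_le_left _ _)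
    · exact (le_max_right _ _).trans (hv I J).1
    · exact hT.2 J (lt_add_one I).le

theorem ExtAntitone.toggleValue_toggle (hT : ExtAntitone T) {d I J : ℤ}
    (hbox : 1 ≤ I ∧ I ≤ a ∧ 1 ≤ J ∧ J ≤ b) (hd : J = I + d) :
    toggleValue (toggle d T) I J = extEntry T I J := by
  have := hT.max_le_le_min I J
  unfold toggleValue
  rw [extEntry_toggle_of_ne T (by omega), extEntry_toggle_of_ne T (by omega),
    extEntry_toggle_of_ne T (by omega), extEntry_toggle_of_ne T (by omega),
    hT.extEntry_toggle, if_pos ⟨hbox, hd⟩, toggleValue]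
  omega

theorem ExtAntitone.toggle_toggle (hT : ExtAntitone T) (d : ℤ) : toggle d (toggle d T) = T := by
  funext i j
  apply Fin.ext
  rw [← extEntry_natCast_add_one (toggle d (toggle d T)) i j, ← extEntry_natCast_add_one T i j,
    (hT.extAntitone_toggle d).extEntry_toggle]
  split_ifs with h
  · exact hT.toggleValue_toggle h.1 h.2
  · exact extEntry_toggle_of_ne T fun hd => h ⟨by omega, hd⟩

theorem toggle_mem (hT : T ∈ PlanePartitions a b c) (d : ℤ) :
    toggle d T ∈ PlanePartitions a b c :=
  extAntitone_iff_mem.mp ((extAntitone_iff_mem.mpr hT).extAntitone_toggle d)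

end toggle

def diagSum (T : Fin a → Fin b → Fin (c + 1)) (d : ℤ) : ℕ :=
  ∑ i ∈ range a, extEntry T (i + 1) (i + 1 + d)

section diagSum

variable {T : Fin a → Fin b → Fin (c + 1)}

theorem ExtAntitone.extEntry_toggle_add_extEntry (hT : ExtAntitone T) {d I : ℤ} (hd : d < b)
    (hI : 1 ≤ I) (hIa : I ≤ a) :
    extEntry (toggle d T) I (I + d) + extEntry T I (I + d) =
      max (extEntry T I (I + d + 1)) (extEntry T (I + 1) (I + d)) +
        min (extEntry T (I - 1) (I + d)) (extEntry T I (I + d - 1)) := by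
  rw [hT.extEntry_toggle]
  split_ifs with h
  · have := hT.max_le_le_min I (I + d)
    unfold toggleValue
    omega
  rcases le_or_gt (I + d) 0 with hJ | hJ
  · have := extEntry_le T I (I + d + 1)
    rw [extEntry_of_nonpos T (Or.inr hJ), extEntry_of_nonpos T (I := I + 1) (Or.inr hJ),
      extEntry_of_nonpos T (I := I - 1) (Or.inr hJ),
      extEntry_of_nonpos T (J := I + d - 1) (Or.inr (by omega))]
    omega
  · -- right of the box: `I > b - d ≥ 1`, so the cell above is still in a row `≥ 1`
    have hb : b < I + d := by omega
    rw [extEntry_of_gt T hI hJ (Or.inr hb), extEntry_of_gt T hI (by omega) (Or.inr (by omega)),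
      extEntry_of_gt T (I := I + 1) (by omega) hJ (Or.inr hb),
      extEntry_of_gt T (I := I - 1) (by omega) hJ (Or.inr hb)]
    simp

theorem ExtAntitone.diagSum_toggle_add (hT : ExtAntitone T) {d : ℤ} (hdb : d < b) (hda : -a < d) :
    diagSum (toggle d T) d + diagSum T d = diagSum T (d + 1) + diagSum T (d - 1) := by
  have shuffle := sum_range_max_add_min (fun k : ℕ => extEntry T k (k + (d + 1)))
    (fun k : ℕ => extEntry T k (k + (d - 1))) a
    (by rw [extEntry_of_nonpos T (I := ((0 : ℕ) : ℤ)) (Or.inl (by simp))]; exact extEntry_le ..)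
    (by rw [extEntry_of_gt T (by omega) (by omega) (Or.inl (by omega))]; exact Nat.zero_le _)
  push_cast at shuffle
  rw [diagSum, diagSum, ← sum_add_distrib, diagSum, diagSum, ← shuffle]
  refine sum_congr rfl fun i hi => ?_
  rw [hT.extEntry_toggle_add_extEntry hdb (by omega) (by simp at hi; omega)]
  ring_nf

end diagSum

theorem sum_diagSum_toggle (d : ℤ) :
    ∑ T ∈ PlanePartitions a b c, diagSum (toggle d T) d =
      ∑ T ∈ PlanePartitions a b c, diagSum T d :=
  sum_nbij' (toggle d) (toggle d) (fun _ hT => toggle_mem hT d) (fun _ hT => toggle_mem hT d)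
    (fun _ hT => (extAntitone_iff_mem.mpr hT).toggle_toggle d)
    (fun _ hT => (extAntitone_iff_mem.mpr hT).toggle_toggle d) fun _ _ => rfl

variable (a b c)

def diagTotal (v : ℕ) : ℕ :=
  ∑ T ∈ PlanePartitions a b c, diagSum T ((b : ℤ) - v)

theorem diagTotal_add_diagTotal_add_two {w : ℕ} (hw : w + 2 ≤ a + b) :
    diagTotal a b c w + diagTotal a b c (w + 2) = 2 * diagTotal a b c (w + 1) := by
  set d : ℤ := (b : ℤ) - (w + 1 : ℕ) with hd
  have h₁ : (b : ℤ) - w = d + 1 := by omega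
  have h₂ : (b : ℤ) - (w + 2 : ℕ) = d - 1 := by omega
  rw [diagTotal, diagTotal, diagTotal, h₁, h₂, ← hd, two_mul]
  nth_rw 1 [← sum_diagSum_toggle d]
  rw [← sum_add_distrib, ← sum_add_distrib]
  exact sum_congr rfl fun T hT =>
    ((extAntitone_iff_mem.mpr hT).diagSum_toggle_add (by omega) (by omega)).symm

theorem diagTotal_zero : diagTotal a b c 0 = 0 :=
  sum_eq_zero fun T _ => sum_eq_zero fun i _ =>
    extEntry_of_gt T (by omega) (by omega) (Or.inr (by omega))

theorem diagTotal_eq_mul_card : diagTotal a b c (a + b) = a * c * #(PlanePartitions a b c) := by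
  have hdiag (T : Fin a → Fin b → Fin (c + 1)) : diagSum T (b - (a + b : ℕ)) = a * c := by
    rw [diagSum, sum_congr rfl fun i hi => extEntry_of_nonpos T (Or.inr (by simp at hi; omega))]
    simp
  rw [diagTotal, sum_congr rfl fun T _ => hdiag T, sum_const, smul_eq_mul, mul_comm]

theorem add_mul_diagTotal {v : ℕ} (hv : v ≤ a + b) :
    (a + b) * diagTotal a b c v = v * (a * c * #(PlanePartitions a b c)) := by
  have hlin := eq_nsmul_of_add_eq_two_nsmul (diagTotal_zero a b c)
    (fun w hw => by rw [smul_eq_mul]; exact diagTotal_add_diagTotal_add_two a b c hw)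
  rw [← diagTotal_eq_mul_card, hlin v hv, hlin (a + b) le_rfl, smul_eq_mul, smul_eq_mul]
  ring

theorem sum_entry_eq_diagSum {x : ℕ} (hxa : a ≤ x) (hxb : b ≤ x)
    (T : Fin a → Fin b → Fin (c + 1)) :
    ∑ i ∈ Icc 1 (a + b - x), entry a b c T i (x + i - a) = diagSum T ((x : ℤ) - a) := by
  have hdrop : ∑ i ∈ range (a + b - x), extEntry T (i + 1) (i + 1 + ((x : ℤ) - a)) =
      diagSum T ((x : ℤ) - a) := by
    refine sum_subset (range_subset_range.mpr (by omega)) fun i hi hi' => ?_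
    simp only [mem_range] at hi hi'
    exact extEntry_of_gt T (by omega) (by omega) (Or.inr (by omega))
  rw [← hdrop, ← Ico_add_one_right_eq_Icc, sum_Ico_eq_sum_range, add_tsub_cancel_right]
  refine sum_congr rfl fun i hi => ?_
  simp only [mem_range] at hi
  rw [entry_eq_extEntry T (by omega) (by omega)]
  congr 1 <;> push_cast <;> omega

theorem card_pos : 0 < #(PlanePartitions a b c) :=
  Finset.card_pos.mpr ⟨fun _ _ => 0, by simp [PlanePartitions]⟩

end PlanePartitions

theorem diagonal_expected_sum_high_general (a b c : ℕ) (ha : 0 < a)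
    (x : ℕ) (hx1 : max a b ≤ x) (hx2 : x ≤ a + b - 1) :
    ∑ i ∈ Finset.Icc 1 (a + b - x), E a b c i (x + i - a)
      = (a : ℚ) * c * ((a : ℚ) + b - x) / ((a : ℚ) + b) := by
  obtain ⟨hxa, hxb⟩ := max_le_iff.mp hx1
  have hsum : ∑ i ∈ Icc 1 (a + b - x), E a b c i (x + i - a) =
      PlanePartitions.diagTotal a b c (a + b - x) / #(PlanePartitions a b c) := by
    have hd : (b : ℤ) - (a + b - x : ℕ) = x - a := by omega
    simp only [E, ← sum_div, PlanePartitions.diagTotal, hd,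
      ← PlanePartitions.sum_entry_eq_diagSum a b c hxa hxb]
    rw [sum_comm]
    push_cast
    rfl
  have key : ((a + b : ℕ) : ℚ) * PlanePartitions.diagTotal a b c (a + b - x) =
      ((a + b - x : ℕ) : ℚ) * (a * c * #(PlanePartitions a b c)) := by
    exact_mod_cast PlanePartitions.add_mul_diagTotal a b c (v := a + b - x) (by omega)
  push_cast [Nat.cast_sub (show x ≤ a + b by omega)] at key
  have hN : (#(PlanePartitions a b c) : ℚ) ≠ 0 := by
    exact_mod_cast (PlanePartitions.card_pos a b c).ne'
  rw [hsum, div_eq_div_iff hN (by positivity)]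
  linear_combination key

theorem diagonal_expected_sum_high (a b c : ℕ) (ha : 0 < a) (hb : 0 < b) (hc : 0 < c)
    (x : ℕ) (hx1 : max a b ≤ x) (hx2 : x ≤ a + b - 1) :
    ∑ i ∈ Finset.Icc 1 (a + b - x), E a b c i (x + i - a)
      = (a : ℚ) * c * ((a : ℚ) + b - x) / ((a : ℚ) + b) :=
  diagonal_expected_sum_high_general a b c ha x hx1 hx2
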